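/- Let ℓ,m,n ∈ ℕ with N := ℓ+m+n ≥ 1, and let F ∈ ℂ[x₁,…,x_N] be invariant under all permutations of 𝔖_{ℓ,m,n} (the permutations preserving each of the blocks {1,…,ℓ}, {ℓ+1,…,ℓ+m}, {ℓ+m+1,…,N}). Let the parameters be block-invariant: α_j = a_r and β_j = b_r for all j in block r (r = 1,2,3), and γ_{j,k} = g_{rs} whenever j lies in block r and k in block s, that is, γ_{j,k} depends only on the unordered pair of blocks containing j and k. Suppose ∏_{j=1}^N |x_j|^{Re α_j}|1−x_j|^{Re β_j} · ∏_{1≤j<k≤N}|x_k−x_j|^{2 Re γ_{j,k}} · |F(x)| is Lebesgue integrable on □_{ℓ,m,n}. Then ∫_{□_{ℓ,m,n}} Ψ_{𝛂,𝛃,𝛄}(x)·F(x) dx = [ ∏_{k=1}^{ℓ} Σ_{i=0}^{k−1} e^{2πi·i·g_{11}} ] · [ ∏_{k=1}^{m} Σ_{i=0}^{k−1} e^{2πi·i·g_{22}} ] · [ ∏_{k=1}^{n} Σ_{i=0}^{k−1} e^{2πi·i·g_{33}} ] · ∫_{△_{ℓ,m,n}} ∏_{j=1}^N |x_j|^{α_j}|1−x_j|^{β_j}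 · ∏_{1≤j<k≤N}(x_k−x_j)^{2γ_{j,k}} · F(x) dx, where g_{rr} is the common value of γ_{j,k} for j,k in block r. -/

import Mathlib

open MeasureTheory
open scoped BigOperators

noncomputable def absPow (t : ℝ) (c : ℂ) : ℂ :=
  if t = 0 then 0 else Complex.exp (c * Real.log t)

noncomputable def absPowR (t : ℝ) (c : ℝ) : ℝ :=
  if t = 0 then 0 else Real.exp (c * Real.log t)

noncomputable def iPow (w : ℝ) (c : ℂ) : ℂ :=
  if 0 < w then absPow w c
  else if w < 0 then Complex.exp ((Real.pi : ℂ) * Complex.I * c) * absPow w c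
  else 0

def boxLMN (ℓ m n : ℕ) : Set (Fin (ℓ + m + n) → ℝ) :=
  {x | ∀ i : Fin (ℓ + m + n),
    ((i : ℕ) < ℓ → x i ≤ 0) ∧
    (ℓ ≤ (i : ℕ) ∧ (i : ℕ) < ℓ + m → 0 ≤ x i ∧ x i ≤ 1) ∧
    (ℓ + m ≤ (i : ℕ) → 1 ≤ x i)}

def simplexLMN (ℓ m n : ℕ) : Set (Fin (ℓ + m + n) → ℝ) :=
  boxLMN ℓ m n ∩ {x | ∀ i j : Fin (ℓ + m + n), i ≤ j → x i ≤ x j}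

def blockIdx (ℓ m : ℕ) {N : ℕ} (i : Fin N) : ℕ :=
  if (i : ℕ) < ℓ then 0 else if (i : ℕ) < ℓ + m then 1 else 2

noncomputable def dfIntG (N : ℕ) (α β : Fin N → ℂ) (γ : Fin N → Fin N → ℂ)
    (x : Fin N → ℝ) : ℂ :=
  (∏ j, absPow (x j) (α j) * absPow (1 - x j) (β j)) *
    ∏ j, ∏ k, if j < k then iPow (x k - x j) (2 * γ j k) else 1

/-- The `(ℓ,m,n)`-Selberg integrand (real nonnegative power bases on the simplex). -/
noncomputable def selIntG (N : ℕ) (α β : Fin N → ℂ) (γ : Fin N → Fin N → ℂ)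
    (x : Fin N → ℝ) : ℂ :=
  (∏ j, absPow (x j) (α j) * absPow (1 - x j) (β j)) *
    ∏ j, ∏ k, if j < k then absPow (x k - x j) (2 * γ j k) else 1

noncomputable def dfMajG (N : ℕ) (α β : Fin N → ℂ) (γ : Fin N → Fin N → ℂ)
    (x : Fin N → ℝ) : ℝ :=
  (∏ j, absPowR (x j) (α j).re * absPowR (1 - x j) (β j).re) *
    ∏ j, ∏ k, if j < k then absPowR (x k - x j) (2 * (γ j k).re) else 1

open Finset Equiv

section Defs
variable (ℓ m n : ℕ)

def EE : (Fin ℓ ⊕ Fin m) ⊕ Fin n ≃ Fin (ℓ + m + n) :=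
  (Equiv.sumCongr (finSumFinEquiv : Fin ℓ ⊕ Fin m ≃ Fin (ℓ + m)) (Equiv.refl (Fin n))).trans
    finSumFinEquiv

def e0 (v : Fin ℓ) : Fin (ℓ + m + n) := EE ℓ m n (Sum.inl (Sum.inl v))
def e1 (v : Fin m) : Fin (ℓ + m + n) := EE ℓ m n (Sum.inl (Sum.inr v))
def e2 (v : Fin n) : Fin (ℓ + m + n) := EE ℓ m n (Sum.inr v)

def Phi (t : Perm (Fin ℓ) × Perm (Fin m) × Perm (Fin n)) : Perm (Fin (ℓ + m + n)) :=
  (EE ℓ m n).permCongr (Equiv.sumCongr (Equiv.sumCongr t.1 t.2.1) t.2.2)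

noncomputable def Qfun (gB : ℕ → ℕ → ℂ)
    (t : Perm (Fin ℓ) × Perm (Fin m) × Perm (Fin n))
    (a b : Fin (ℓ + m + n)) : ℂ :=
  if a < b ∧ Phi ℓ m n t b < Phi ℓ m n t a
    then Complex.exp (2 * (Real.pi : ℂ) * Complex.I * gB (blockIdx ℓ m a) (blockIdx ℓ m a))
    else 1

noncomputable def phase (gB : ℕ → ℕ → ℂ)
    (t : Perm (Fin ℓ) × Perm (Fin m) × Perm (Fin n)) : ℂ :=
  ∏ a, ∏ b, Qfun ℓ m n gB t a b

end Defs

variable {ℓ m n : ℕ}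

theorem Equiv.Perm.apply_inv_self {α : Type*} (f : Equiv.Perm α) (x : α) : f (f⁻¹ x) = x :=
  f.apply_symm_apply x

lemma e0_val (v : Fin ℓ) : ((e0 ℓ m n v : Fin (ℓ+m+n)) : ℕ) = (v : ℕ) := by
  simp [e0, EE]

lemma e1_val (v : Fin m) : ((e1 ℓ m n v : Fin (ℓ+m+n)) : ℕ) = ℓ + (v : ℕ) := by
  simp [e1, EE]

lemma e2_val (v : Fin n) : ((e2 ℓ m n v : Fin (ℓ+m+n)) : ℕ) = ℓ + m + (v : ℕ) := by
  simp [e2, EE]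

lemma blk_e0 (v : Fin ℓ) : blockIdx ℓ m (e0 ℓ m n v) = 0 := by
  have := e0_val (m := m) (n := n) v
  have hv := v.isLt
  simp only [blockIdx, this]
  split_ifs <;> omega

lemma blk_e1 (v : Fin m) : blockIdx ℓ m (e1 ℓ m n v) = 1 := by
  have := e1_val (ℓ := ℓ) (n := n) v
  have hv := v.isLt
  simp only [blockIdx, this]
  split_ifs <;> omega

lemma blk_e2 (v : Fin n) : blockIdx ℓ m (e2 ℓ m n v) = 2 := by
  have := e2_val (ℓ := ℓ) (m := m) v
  simp only [blockIdx, this]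
  split_ifs <;> omega

lemma blk_mono {i j : Fin (ℓ+m+n)} (h : i ≤ j) : blockIdx ℓ m i ≤ blockIdx ℓ m j := by
  have : (i : ℕ) ≤ (j : ℕ) := h
  simp only [blockIdx]
  split_ifs <;> omega

lemma idx_cases (i : Fin (ℓ+m+n)) :
    (∃ v, i = e0 ℓ m n v) ∨ (∃ v, i = e1 ℓ m n v) ∨ (∃ v, i = e2 ℓ m n v) := by
  obtain ⟨s, rfl⟩ := (EE ℓ m n).surjective i
  rcases s with (v | v) | v
  · exact Or.inl ⟨v, rfl⟩
  · exact Or.inr (Or.inl ⟨v, rfl⟩)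
  · exact Or.inr (Or.inr ⟨v, rfl⟩)

lemma Phi_e0 (t) (v : Fin ℓ) : Phi ℓ m n t (e0 ℓ m n v) = e0 ℓ m n (t.1 v) := by
  simp [Phi, e0, Equiv.permCongr_apply]

lemma Phi_e1 (t) (v : Fin m) : Phi ℓ m n t (e1 ℓ m n v) = e1 ℓ m n (t.2.1 v) := by
  simp [Phi, e1, Equiv.permCongr_apply]

lemma Phi_e2 (t) (v : Fin n) : Phi ℓ m n t (e2 ℓ m n v) = e2 ℓ m n (t.2.2 v) := by
  simp [Phi, e2, Equiv.permCongr_apply]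

lemma blk_Phi (t) (i : Fin (ℓ+m+n)) :
    blockIdx ℓ m (Phi ℓ m n t i) = blockIdx ℓ m i := by
  rcases idx_cases i with ⟨v, rfl⟩ | ⟨v, rfl⟩ | ⟨v, rfl⟩
  · rw [Phi_e0, blk_e0, blk_e0]
  · rw [Phi_e1, blk_e1, blk_e1]
  · rw [Phi_e2, blk_e2, blk_e2]

lemma e0_strictMono : StrictMono (e0 ℓ m n) := by
  intro a b h
  rw [Fin.lt_def, e0_val, e0_val]; exact h

lemma e1_strictMono : StrictMono (e1 ℓ m n) := by
  intro a b h
  rw [Fin.lt_def, e1_val, e1_val]; exact Nat.add_lt_add_left h ℓ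

lemma e2_strictMono : StrictMono (e2 ℓ m n) := by
  intro a b h
  rw [Fin.lt_def, e2_val, e2_val]; exact Nat.add_lt_add_left h (ℓ+m)

lemma prod_pairs {M : Type*} [CommMonoid M] {k : ℕ} (f : Fin k → Fin k → M)
    (hf : ∀ a, f a a = 1) :
    ∏ a, ∏ b, f a b = ∏ a, ∏ b, (if a < b then f a b * f b a else 1) := by
  classical
  have key : ∀ a b : Fin k, f a b
      = (if a < b then f a b else 1) * ((if b < a then f a b else 1) * (if a = b then f a b else 1)) := by
    intro a b
    rcases lt_trichotomy a b with h | h | h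
    · simp [h, not_lt_of_gt h, h.ne]
    · subst h; simp [hf]
    · simp [h, not_lt_of_gt h, h.ne']
  calc ∏ a, ∏ b, f a b
      = ∏ a, ∏ b, ((if a < b then f a b else 1) *
          ((if b < a then f a b else 1) * (if a = b then f a b else 1))) := by
        simp_rw [← key]
    _ = (∏ a, ∏ b, (if a < b then f a b else 1)) *
        ((∏ a, ∏ b, (if b < a then f a b else 1)) *
         (∏ a, ∏ b, (if a = b then f a b else 1))) := by
        simp_rw [Finset.prod_mul_distrib]
    _ = ∏ a, ∏ b, (if a < b then f a b * f b a else 1) := by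
        have h1 : (∏ a, ∏ b, (if a = b then f a b else 1)) = 1 := by
          rw [Finset.prod_comm]
          refine Finset.prod_eq_one fun b _ => ?_
          rw [Finset.prod_eq_single b (fun c _ hc => by simp [hc]) (by simp)]
          simp [hf]
        have h2 : (∏ a, ∏ b, (if b < a then f a b else 1))
            = ∏ a, ∏ b, (if a < b then f b a else 1) := Finset.prod_comm
        rw [h1, h2, mul_one, ← Finset.prod_mul_distrib]
        refine Finset.prod_congr rfl fun a _ => ?_
        rw [← Finset.prod_mul_distrib]
        refine Finset.prod_congr rfl fun b _ => ?_
        split_ifs <;> simp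

noncomputable def Wq {k : ℕ} (q : ℂ) (σ : Equiv.Perm (Fin k)) : ℂ :=
  ∏ a, ∏ b, if a < b ∧ σ b < σ a then q else 1

lemma sum_Wq_comp {k K : ℕ} (q : ℂ) (s : Fin k → Fin K) (hs : Function.Injective s) :
    ∑ σ : Equiv.Perm (Fin k), ∏ a, ∏ b, (if a < b ∧ s (σ b) < s (σ a) then q else 1)
      = ∑ σ : Equiv.Perm (Fin k), Wq q σ := by
  classical
  set τ := Tuple.sort s with hτ
  have hsm : StrictMono (s ∘ τ) :=
    (Tuple.monotone_sort s).strictMono_of_injective (hs.comp τ.injective)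
  refine (Fintype.sum_equiv (Equiv.mulLeft τ) _ _ ?_).symm
  intro ρ
  unfold Wq
  refine Finset.prod_congr rfl fun a _ => Finset.prod_congr rfl fun b _ => ?_
  have : s ((τ * ρ) b) < s ((τ * ρ) a) ↔ ρ b < ρ a := by
    simpa using hsm.lt_iff_lt (a := ρ b) (b := ρ a)
  simp only [Equiv.coe_mulLeft, Equiv.Perm.mul_apply] at *
  simp only [this]

lemma card_filter_val_lt {k : ℕ} (pv : ℕ) (h : pv ≤ k) :
    (Finset.univ.filter fun v : Fin k => (v : ℕ) < pv).card = pv := by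
  classical
  have : (Finset.univ.filter fun v : Fin k => (v : ℕ) < pv)
      = Finset.map (Fin.castLEEmb h) Finset.univ := by
    ext v
    simp only [Finset.mem_filter, Finset.mem_univ, true_and, Finset.mem_map,
      Fin.castLEEmb_apply]
    constructor
    · intro hv; exact ⟨⟨(v : ℕ), hv⟩, by ext; simp⟩
    · rintro ⟨w, rfl⟩; simpa using w.isLt
  rw [this, Finset.card_map]; simp

lemma sum_Wq (k : ℕ) (q : ℂ) :
    ∑ σ : Equiv.Perm (Fin k), Wq q σ
      = ∏ j ∈ Finset.range k, ∑ i ∈ Finset.range (j + 1), q ^ i := by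
  classical
  induction k with
  | zero => simp [Wq]
  | succ k ih =>
    rw [← Equiv.Perm.decomposeFin.symm.sum_comp (g := fun σ => Wq q σ)]
    rw [Fintype.sum_prod_type]
    have key : ∀ (p : Fin (k+1)) (σ : Equiv.Perm (Fin k)),
        Wq q (Equiv.Perm.decomposeFin.symm (p, σ))
          = q ^ (p : ℕ) * ∏ a, ∏ b, (if a < b ∧
              (Equiv.swap 0 p (σ b).succ) < (Equiv.swap 0 p (σ a).succ) then q else 1) := by
      intro p σ
      set π := Equiv.Perm.decomposeFin.symm (p, σ) with hπ
      have hπ0 : π 0 = p := Equiv.Perm.decomposeFin_symm_apply_zero p σ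
      have hπs : ∀ i : Fin k, π i.succ = Equiv.swap 0 p (σ i).succ := fun i =>
        Equiv.Perm.decomposeFin_symm_apply_succ σ p i
      have hsv : ∀ v : Fin k, (Equiv.swap 0 p v.succ < p) ↔ (v : ℕ) < (p : ℕ) := by
        intro v
        by_cases hvp : v.succ = p
        · rw [hvp, Equiv.swap_apply_right]
          have hv : (v:ℕ) + 1 = (p:ℕ) := by
            rw [← hvp, Fin.val_succ]
          rw [Fin.lt_def, Fin.val_zero]
          omega
        · rw [Equiv.swap_apply_of_ne_of_ne (Fin.succ_ne_zero v) hvp]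
          have h1 : ((v.succ : Fin (k+1)) : ℕ) = (v:ℕ)+1 := Fin.val_succ v
          rw [Fin.lt_def, h1]
          have : (v:ℕ) + 1 ≠ (p:ℕ) := by
            intro hc; apply hvp; ext; rw [Fin.val_succ]; exact hc
          omega
      have h1 : (∏ b : Fin (k+1), if (0:Fin (k+1)) < b ∧ π b < π 0 then q else 1)
          = q ^ (p:ℕ) := by
        rw [Fin.prod_univ_succ]
        simp only [lt_self_iff_false, false_and, if_false, one_mul]
        have hb : ∀ b : Fin k, (if (0:Fin (k+1)) < b.succ ∧ π b.succ < π 0 then q else 1)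
            = (if ((σ b) : ℕ) < (p:ℕ) then q else 1) := by
          intro b
          rw [hπs, hπ0]
          simp [Fin.succ_pos, hsv (σ b)]
        simp only [hb]
        rw [Equiv.prod_comp σ (fun v : Fin k => if (v:ℕ) < (p:ℕ) then q else 1)]
        rw [Finset.prod_ite, Finset.prod_const, Finset.prod_const, one_pow, mul_one]
        rw [card_filter_val_lt (p:ℕ) (Nat.lt_succ_iff.mp p.isLt)]
      have h2 : (∏ a : Fin k, ∏ b : Fin (k+1), if a.succ < b ∧ π b < π a.succ then q else 1)
          = ∏ a, ∏ b, (if a < b ∧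
              (Equiv.swap 0 p (σ b).succ) < (Equiv.swap 0 p (σ a).succ) then q else 1) := by
        refine Finset.prod_congr rfl fun a _ => ?_
        rw [Fin.prod_univ_succ]
        have h0 : (if a.succ < 0 ∧ π 0 < π a.succ then q else 1) = 1 := by
          simp
        rw [h0, one_mul]
        refine Finset.prod_congr rfl fun b _ => ?_
        rw [hπs, hπs]; simp only [Fin.succ_lt_succ_iff]
      unfold Wq
      rw [Fin.prod_univ_succ, h1, h2]
    have step : ∀ p : Fin (k+1),
        ∑ σ : Equiv.Perm (Fin k), Wq q (Equiv.Perm.decomposeFin.symm (p, σ))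
          = q ^ (p:ℕ) * ∑ σ : Equiv.Perm (Fin k), Wq q σ := by
      intro p
      simp only [key p]
      rw [← Finset.mul_sum]
      congr 1
      exact sum_Wq_comp q (fun v => Equiv.swap 0 p v.succ)
        ((Equiv.injective _).comp (Fin.succ_injective k))
    simp only [step]
    rw [← Finset.sum_mul, ih, Finset.prod_range_succ, mul_comm]
    congr 1
    rw [Fin.sum_univ_eq_sum_range (fun i => q ^ i) (k+1)]

lemma prod_split {M : Type*} [CommMonoid M] (h : Fin (ℓ+m+n) → M) :
    ∏ a, h a = ((∏ v, h (e0 ℓ m n v)) * (∏ v, h (e1 ℓ m n v))) * (∏ v, h (e2 ℓ m n v)) := by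
  rw [← Equiv.prod_comp (EE ℓ m n) h, Fintype.prod_sum_type, Fintype.prod_sum_type]
  rfl

lemma blk_eq_of_inv (t) {a b : Fin (ℓ+m+n)} (hab : a < b)
    (hinv : Phi ℓ m n t b < Phi ℓ m n t a) : blockIdx ℓ m a = blockIdx ℓ m b := by
  refine le_antisymm (blk_mono hab.le) ?_
  rw [← blk_Phi t a, ← blk_Phi t b]
  exact blk_mono hinv.le

lemma phase_eq (gB : ℕ → ℕ → ℂ) (t) :
    phase ℓ m n gB t =
      Wq (Complex.exp (2 * (Real.pi : ℂ) * Complex.I * gB 0 0)) t.1 *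
      Wq (Complex.exp (2 * (Real.pi : ℂ) * Complex.I * gB 1 1)) t.2.1 *
      Wq (Complex.exp (2 * (Real.pi : ℂ) * Complex.I * gB 2 2)) t.2.2 := by
  classical
  have hcross : ∀ a b, blockIdx ℓ m a ≠ blockIdx ℓ m b → Qfun ℓ m n gB t a b = 1 := by
    intro a b hne
    rw [Qfun, if_neg]
    rintro ⟨hab, hinv⟩
    exact hne (blk_eq_of_inv t hab hinv)
  unfold phase
  rw [prod_split (fun a => ∏ b, Qfun ℓ m n gB t a b)]
  have inner0 : ∀ v : Fin ℓ, (∏ b, Qfun ℓ m n gB t (e0 ℓ m n v) b)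
      = ∏ w, Qfun ℓ m n gB t (e0 ℓ m n v) (e0 ℓ m n w) := by
    intro v
    rw [prod_split (fun b => Qfun ℓ m n gB t (e0 ℓ m n v) b),
      Finset.prod_eq_one (fun w (_ : w ∈ Finset.univ) =>
        hcross _ (e1 ℓ m n w) (by rw [blk_e0, blk_e1]; omega)),
      Finset.prod_eq_one (fun w (_ : w ∈ Finset.univ) =>
        hcross _ (e2 ℓ m n w) (by rw [blk_e0, blk_e2]; omega)),
      mul_one, mul_one]
  have inner1 : ∀ v : Fin m, (∏ b, Qfun ℓ m n gB t (e1 ℓ m n v) b)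
      = ∏ w, Qfun ℓ m n gB t (e1 ℓ m n v) (e1 ℓ m n w) := by
    intro v
    rw [prod_split (fun b => Qfun ℓ m n gB t (e1 ℓ m n v) b),
      Finset.prod_eq_one (fun w (_ : w ∈ Finset.univ) =>
        hcross _ (e0 ℓ m n w) (by rw [blk_e1, blk_e0]; omega)),
      Finset.prod_eq_one (fun w (_ : w ∈ Finset.univ) =>
        hcross _ (e2 ℓ m n w) (by rw [blk_e1, blk_e2]; omega)),
      mul_one, one_mul]
  have inner2 : ∀ v : Fin n, (∏ b, Qfun ℓ m n gB t (e2 ℓ m n v) b)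
      = ∏ w, Qfun ℓ m n gB t (e2 ℓ m n v) (e2 ℓ m n w) := by
    intro v
    rw [prod_split (fun b => Qfun ℓ m n gB t (e2 ℓ m n v) b),
      Finset.prod_eq_one (fun w (_ : w ∈ Finset.univ) =>
        hcross _ (e0 ℓ m n w) (by rw [blk_e2, blk_e0]; omega)),
      Finset.prod_eq_one (fun w (_ : w ∈ Finset.univ) =>
        hcross _ (e1 ℓ m n w) (by rw [blk_e2, blk_e1]; omega)),
      one_mul, one_mul]
  have d0 : ∀ v w : Fin ℓ, Qfun ℓ m n gB t (e0 ℓ m n v) (e0 ℓ m n w)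
      = (if v < w ∧ t.1 w < t.1 v
          then Complex.exp (2 * (Real.pi : ℂ) * Complex.I * gB 0 0) else 1) := by
    intro v w
    rw [Qfun, Phi_e0, Phi_e0, blk_e0]
    exact if_congr (and_congr e0_strictMono.lt_iff_lt e0_strictMono.lt_iff_lt) rfl rfl
  have d1 : ∀ v w : Fin m, Qfun ℓ m n gB t (e1 ℓ m n v) (e1 ℓ m n w)
      = (if v < w ∧ t.2.1 w < t.2.1 v
          then Complex.exp (2 * (Real.pi : ℂ) * Complex.I * gB 1 1) else 1) := by
    intro v w
    rw [Qfun, Phi_e1, Phi_e1, blk_e1]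
    exact if_congr (and_congr e1_strictMono.lt_iff_lt e1_strictMono.lt_iff_lt) rfl rfl
  have d2 : ∀ v w : Fin n, Qfun ℓ m n gB t (e2 ℓ m n v) (e2 ℓ m n w)
      = (if v < w ∧ t.2.2 w < t.2.2 v
          then Complex.exp (2 * (Real.pi : ℂ) * Complex.I * gB 2 2) else 1) := by
    intro v w
    rw [Qfun, Phi_e2, Phi_e2, blk_e2]
    exact if_congr (and_congr e2_strictMono.lt_iff_lt e2_strictMono.lt_iff_lt) rfl rfl
  congr 1
  · congr 1
    · rw [Finset.prod_congr rfl fun v _ => inner0 v]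
      unfold Wq
      exact Finset.prod_congr rfl fun v _ => Finset.prod_congr rfl fun w _ => d0 v w
    · rw [Finset.prod_congr rfl fun v _ => inner1 v]
      unfold Wq
      exact Finset.prod_congr rfl fun v _ => Finset.prod_congr rfl fun w _ => d1 v w
  · rw [Finset.prod_congr rfl fun v _ => inner2 v]
    unfold Wq
    exact Finset.prod_congr rfl fun v _ => Finset.prod_congr rfl fun w _ => d2 v w

lemma absPow_neg (s : ℝ) (c : ℂ) : absPow (-s) c = absPow s c := by
  unfold absPow
  rw [Real.log_neg_eq_log]
  simp [neg_eq_zero]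

lemma iPow_pos {w : ℝ} (h : 0 < w) (c : ℂ) : iPow w c = absPow w c := by
  simp [iPow, h]

lemma iPow_neg' {w : ℝ} (h : w < 0) (c : ℂ) :
    iPow w c = Complex.exp ((Real.pi : ℂ) * Complex.I * c) * absPow w c := by
  simp [iPow, h, not_lt_of_gt h]

lemma core_eq (α β : Fin (ℓ+m+n) → ℂ) (γ : Fin (ℓ+m+n) → Fin (ℓ+m+n) → ℂ)
    (gB : ℕ → ℕ → ℂ)
    (hα : ∀ i j, blockIdx ℓ m i = blockIdx ℓ m j → α i = α j)
    (hβ : ∀ i j, blockIdx ℓ m i = blockIdx ℓ m j → β i = β j)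
    (hγ : ∀ j k : Fin (ℓ+m+n), j < k → γ j k = gB (blockIdx ℓ m j) (blockIdx ℓ m k))
    (t) (x : Fin (ℓ+m+n) → ℝ) (hsm : StrictMono (x ∘ (Phi ℓ m n t))) :
    dfIntG (ℓ+m+n) α β γ x
      = phase ℓ m n gB t * selIntG (ℓ+m+n) α β γ (x ∘ Phi ℓ m n t) := by
  classical
  set σ := Phi ℓ m n t with hσdef
  have hs : (∏ j, absPow (x j) (α j) * absPow (1 - x j) (β j))
      = ∏ a, absPow ((x ∘ σ) a) (α a) * absPow (1 - (x ∘ σ) a) (β a) := by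
    rw [← Equiv.prod_comp σ (fun j => absPow (x j) (α j) * absPow (1 - x j) (β j))]
    refine Finset.prod_congr rfl fun a _ => ?_
    rw [hα (σ a) a (blk_Phi t a), hβ (σ a) a (blk_Phi t a)]
    rfl
  have hp : (∏ j, ∏ k, if j < k then iPow (x k - x j) (2 * γ j k) else 1)
      = (phase ℓ m n gB t)
        * ∏ a, ∏ b, if a < b then absPow ((x ∘ σ) b - (x ∘ σ) a) (2 * γ a b) else 1 := by
    rw [← Equiv.prod_comp σ (fun j => ∏ k, if j < k then iPow (x k - x j) (2 * γ j k) else 1)]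
    have hinner : ∀ a, (∏ k, if σ a < k then iPow (x k - x (σ a)) (2 * γ (σ a) k) else 1)
        = ∏ b, (if σ a < σ b then iPow (x (σ b) - x (σ a)) (2 * γ (σ a) (σ b)) else 1) :=
      fun a => (Equiv.prod_comp σ
        (fun k => if σ a < k then iPow (x k - x (σ a)) (2 * γ (σ a) k) else 1)).symm
    calc (∏ a, ∏ k, if σ a < k then iPow (x k - x (σ a)) (2 * γ (σ a) k) else 1)
        = ∏ a, ∏ b, (if σ a < σ b then iPow (x (σ b) - x (σ a)) (2 * γ (σ a) (σ b)) else 1) :=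
          Finset.prod_congr rfl fun a _ => hinner a
      _ = ∏ a, ∏ b, (if a < b then
            (if σ a < σ b then iPow (x (σ b) - x (σ a)) (2 * γ (σ a) (σ b)) else 1) *
            (if σ b < σ a then iPow (x (σ a) - x (σ b)) (2 * γ (σ b) (σ a)) else 1) else 1) := by
          exact prod_pairs _ (fun a => by simp)
      _ = ∏ a, ∏ b, (Qfun ℓ m n gB t a b *
            (if a < b then absPow ((x ∘ σ) b - (x ∘ σ) a) (2 * γ a b) else 1)) := by
          unfold Qfun
          refine Finset.prod_congr rfl fun a _ => Finset.prod_congr rfl fun b _ => ?_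
          by_cases hab : a < b
          · have hy : x (σ a) < x (σ b) := hsm hab
            have hblkab : blockIdx ℓ m (σ a) = blockIdx ℓ m a := blk_Phi t a
            have hblkb : blockIdx ℓ m (σ b) = blockIdx ℓ m b := blk_Phi t b
            rcases lt_trichotomy (σ a) (σ b) with h | h | h
            · rw [if_pos hab, if_pos h, if_neg (asymm h), mul_one,
                if_neg (by rintro ⟨_, hc⟩; exact asymm h hc), one_mul]
              rw [iPow_pos (by simpa using sub_pos.mpr hy)]
              have : γ (σ a) (σ b) = γ a b := by
                rw [hγ (σ a) (σ b) h, hγ a b hab, hblkab, hblkb]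
              rw [this, if_pos hab]
              rfl
            · exact absurd (σ.injective h) (Fin.ne_of_lt hab)
            · have hblk : blockIdx ℓ m a = blockIdx ℓ m b := blk_eq_of_inv t hab h
              rw [if_pos hab, if_neg (asymm h), if_pos h, one_mul, if_pos ⟨hab, h⟩]
              rw [iPow_neg' (by simpa using sub_neg.mpr hy)]
              have hsub : x (σ a) - x (σ b) = -(x (σ b) - x (σ a)) := by ring
              rw [hsub, absPow_neg]
              have h1 : γ (σ b) (σ a) = gB (blockIdx ℓ m a) (blockIdx ℓ m a) := by
                rw [hγ (σ b) (σ a) h, hblkab, hblkb, hblk]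
              have h2 : γ a b = gB (blockIdx ℓ m a) (blockIdx ℓ m a) := by
                rw [hγ a b hab, hblk]
              rw [h1, h2]
              have h3 : (Real.pi : ℂ) * Complex.I *
                  (2 * gB (blockIdx ℓ m a) (blockIdx ℓ m a))
                  = 2 * (Real.pi : ℂ) * Complex.I * gB (blockIdx ℓ m a) (blockIdx ℓ m a) := by
                ring
              rw [h3, if_pos hab]
              rfl
          · rw [if_neg hab, if_neg (by rintro ⟨hc, _⟩; exact hab hc), if_neg hab, mul_one]
        _ = (phase ℓ m n gB t)
            * ∏ a, ∏ b, if a < b then absPow ((x ∘ σ) b - (x ∘ σ) a) (2 * γ a b) else 1 := by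
          unfold phase
          rw [← Finset.prod_mul_distrib]
          exact Finset.prod_congr rfl fun a _ => Finset.prod_mul_distrib
  unfold dfIntG selIntG
  rw [hs, hp]
  ring

-- block-based membership in the box
lemma blk_zero_iff (i : Fin (ℓ+m+n)) : blockIdx ℓ m i = 0 ↔ (i:ℕ) < ℓ := by
  unfold blockIdx; split_ifs with h h' <;> simp [h] <;> omega

lemma blk_one_iff (i : Fin (ℓ+m+n)) :
    blockIdx ℓ m i = 1 ↔ ℓ ≤ (i:ℕ) ∧ (i:ℕ) < ℓ + m := by
  unfold blockIdx; split_ifs with h h' <;> simp <;> omega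

lemma blk_two_iff (i : Fin (ℓ+m+n)) : blockIdx ℓ m i = 2 ↔ ℓ + m ≤ (i:ℕ) := by
  unfold blockIdx; split_ifs with h h' <;> simp <;> omega

lemma mem_box_blk (x : Fin (ℓ+m+n) → ℝ) :
    x ∈ boxLMN ℓ m n ↔ ∀ i,
      (blockIdx ℓ m i = 0 → x i ≤ 0) ∧
      (blockIdx ℓ m i = 1 → 0 ≤ x i ∧ x i ≤ 1) ∧
      (blockIdx ℓ m i = 2 → 1 ≤ x i) := by
  unfold boxLMN
  simp only [Set.mem_setOf_eq, blk_zero_iff, blk_one_iff, blk_two_iff]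

lemma box_comp (t) (x : Fin (ℓ+m+n) → ℝ) :
    x ∈ boxLMN ℓ m n ↔ (x ∘ Phi ℓ m n t) ∈ boxLMN ℓ m n := by
  rw [mem_box_blk, mem_box_blk]
  constructor
  · intro h i
    obtain ⟨h1, h2, h3⟩ := h (Phi ℓ m n t i)
    rw [blk_Phi] at h1 h2 h3
    exact ⟨h1, h2, h3⟩
  · intro h i
    obtain ⟨h1, h2, h3⟩ := h ((Phi ℓ m n t)⁻¹ i)
    have hb : blockIdx ℓ m ((Phi ℓ m n t)⁻¹ i) = blockIdx ℓ m i := by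
      conv_rhs => rw [← Equiv.Perm.apply_inv_self (Phi ℓ m n t) i]
      rw [blk_Phi]
    rw [hb] at h1 h2 h3
    simp only [Function.comp_apply, Equiv.Perm.apply_inv_self] at h1 h2 h3
    exact ⟨h1, h2, h3⟩

-- bounds from the box
lemma box_e0 {x : Fin (ℓ+m+n) → ℝ} (hx : x ∈ boxLMN ℓ m n) (v : Fin ℓ) :
    x (e0 ℓ m n v) ≤ 0 :=
  (hx (e0 ℓ m n v)).1 (by rw [e0_val]; exact v.isLt)

lemma box_e1 {x : Fin (ℓ+m+n) → ℝ} (hx : x ∈ boxLMN ℓ m n) (v : Fin m) :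
    0 ≤ x (e1 ℓ m n v) ∧ x (e1 ℓ m n v) ≤ 1 :=
  (hx (e1 ℓ m n v)).2.1 (by rw [e1_val]; exact ⟨Nat.le_add_right _ _, by have := v.isLt; omega⟩)

lemma box_e2 {x : Fin (ℓ+m+n) → ℝ} (hx : x ∈ boxLMN ℓ m n) (v : Fin n) :
    1 ≤ x (e2 ℓ m n v) :=
  (hx (e2 ℓ m n v)).2.2 (by rw [e2_val]; exact Nat.le_add_right _ _)

open MeasureTheory

lemma measurableSet_box : MeasurableSet (boxLMN ℓ m n) := by
  have : boxLMN ℓ m n = ⋂ i : Fin (ℓ+m+n),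
      ({x : Fin (ℓ+m+n) → ℝ | (i : ℕ) < ℓ → x i ≤ 0} ∩
       ({x | ℓ ≤ (i : ℕ) ∧ (i : ℕ) < ℓ + m → 0 ≤ x i ∧ x i ≤ 1} ∩
        {x | ℓ + m ≤ (i : ℕ) → 1 ≤ x i})) := by
    ext x
    simp only [boxLMN, Set.mem_setOf_eq, Set.mem_iInter, Set.mem_inter_iff]
  rw [this]
  refine MeasurableSet.iInter fun i => ?_
  refine MeasurableSet.inter ?_ (MeasurableSet.inter ?_ ?_)
  · by_cases h : (i : ℕ) < ℓ
    · simp only [h, true_implies]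
      exact measurableSet_le (measurable_pi_apply i) measurable_const
    · simp only [h, false_implies]
      exact MeasurableSet.univ
  · by_cases h : ℓ ≤ (i : ℕ) ∧ (i : ℕ) < ℓ + m
    · have he : {x : Fin (ℓ+m+n) → ℝ | ℓ ≤ (i : ℕ) ∧ (i : ℕ) < ℓ + m → 0 ≤ x i ∧ x i ≤ 1}
          = {x | 0 ≤ x i} ∩ {x | x i ≤ 1} := by
        ext x; simp [h]
      rw [he]
      exact (measurableSet_le measurable_const (measurable_pi_apply i)).inter
        (measurableSet_le (measurable_pi_apply i) measurable_const)
    · simp only [h, false_implies]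
      exact MeasurableSet.univ
  · by_cases h : ℓ + m ≤ (i : ℕ)
    · simp only [h, true_implies]
      exact measurableSet_le measurable_const (measurable_pi_apply i)
    · simp only [h, false_implies]
      exact MeasurableSet.univ

lemma measurableSet_strictMonoSet (σ : Perm (Fin (ℓ+m+n))) :
    MeasurableSet {x : Fin (ℓ+m+n) → ℝ | StrictMono (x ∘ σ)} := by
  have : {x : Fin (ℓ+m+n) → ℝ | StrictMono (x ∘ σ)} =
      ⋂ i, ⋂ j, {x : Fin (ℓ+m+n) → ℝ | i < j → x (σ i) < x (σ j)} := by
    ext x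
    simp only [Set.mem_setOf_eq, Set.mem_iInter, StrictMono]
    exact ⟨fun h i j hij => h hij, fun h a b hab => h a b hab⟩
  rw [this]
  refine MeasurableSet.iInter fun i => MeasurableSet.iInter fun j => ?_
  by_cases h : i < j
  · simp only [h, true_implies]
    exact measurableSet_lt (measurable_pi_apply _) (measurable_pi_apply _)
  · simp only [h, false_implies]
    exact MeasurableSet.univ

def chamber (ℓ m n : ℕ) (t : Perm (Fin ℓ) × Perm (Fin m) × Perm (Fin n)) :
    Set (Fin (ℓ+m+n) → ℝ) :=
  boxLMN ℓ m n ∩ {x | StrictMono (x ∘ (Phi ℓ m n t))}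

lemma measurableSet_chamber (t) : MeasurableSet (chamber ℓ m n t) :=
  measurableSet_box.inter (measurableSet_strictMonoSet _)

lemma null_noninj :
    volume {x : Fin (ℓ+m+n) → ℝ | ¬ Function.Injective x} = 0 := by
  have hsub : {x : Fin (ℓ+m+n) → ℝ | ¬ Function.Injective x} ⊆
      ⋃ p : Fin (ℓ+m+n) × Fin (ℓ+m+n), {x | p.1 ≠ p.2 ∧ x p.1 = x p.2} := by
    intro x hx
    simp only [Function.Injective, not_forall] at hx
    obtain ⟨a, b, hab, hne⟩ := hx
    exact Set.mem_iUnion.2 ⟨(a, b), hne, hab⟩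
  refine measure_mono_null hsub (measure_iUnion_null fun p => ?_)
  by_cases hne : p.1 = p.2
  · have : {x : Fin (ℓ+m+n) → ℝ | p.1 ≠ p.2 ∧ x p.1 = x p.2} = ∅ := by
      ext x; simp [hne]
    rw [this]; exact measure_empty
  · set S : Submodule ℝ (Fin (ℓ+m+n) → ℝ) :=
      { carrier := {x | x p.1 = x p.2}
        add_mem' := fun ha hb => by simp only [Set.mem_setOf_eq] at *; simp [ha, hb]
        zero_mem' := by simp
        smul_mem' := fun c x hx => by simp only [Set.mem_setOf_eq] at *; simp [hx] } with hS
    have hsub2 : {x : Fin (ℓ+m+n) → ℝ | p.1 ≠ p.2 ∧ x p.1 = x p.2} ⊆ (S : Set _) := by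
      intro x hx; exact hx.2
    refine measure_mono_null hsub2 (Measure.addHaar_submodule volume S ?_)
    intro htop
    have : (Pi.single p.1 (1:ℝ)) ∈ S := htop ▸ Submodule.mem_top
    simp only [hS, Submodule.mem_mk, AddSubmonoid.mem_mk, AddSubsemigroup.mem_mk,
      Set.mem_setOf_eq] at this
    rw [Pi.single_eq_same, Pi.single_eq_of_ne (Ne.symm hne)] at this
    exact one_ne_zero this

lemma chamber_pairwise_disjoint :
    Pairwise (Function.onFun Disjoint (chamber ℓ m n)) := by
  intro t t' hne
  rw [Function.onFun, Set.disjoint_left]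
  intro x hx hx'
  apply hne
  have hu : StrictMono (x ∘ Phi ℓ m n t) := hx.2
  have hv : StrictMono (x ∘ Phi ℓ m n t') := hx'.2
  have hxinj : Function.Injective x := by
    intro a b hab
    have : (x ∘ Phi ℓ m n t) ((Phi ℓ m n t)⁻¹ a) = (x ∘ Phi ℓ m n t) ((Phi ℓ m n t)⁻¹ b) := by
      simp only [Function.comp_apply, Equiv.Perm.apply_inv_self]; exact hab
    have := hu.injective this
    calc a = Phi ℓ m n t ((Phi ℓ m n t)⁻¹ a) := (Equiv.Perm.apply_inv_self _ _).symm
    _ = Phi ℓ m n t ((Phi ℓ m n t)⁻¹ b) := by rw [this]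
    _ = b := Equiv.Perm.apply_inv_self _ _
  have hrange : Set.range (x ∘ Phi ℓ m n t) = Set.range (x ∘ Phi ℓ m n t') := by
    rw [Set.range_comp, Set.range_comp, Equiv.range_eq_univ, Equiv.range_eq_univ]
  have inst : WellFoundedLT (Fin (ℓ+m+n)) := inferInstance
  have H := @Set.range_injOn_strictMono (Fin (ℓ+m+n)) ℝ _ _ inst
  have huv : (x ∘ Phi ℓ m n t) = (x ∘ Phi ℓ m n t') := H hu hv hrange
  have hPhi : Phi ℓ m n t = Phi ℓ m n t' := by
    refine Equiv.ext fun i => ?_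
    exact hxinj (congrFun huv i)
  -- injectivity of Phi
  have h0 : t.1 = t'.1 := by
    refine Equiv.ext fun v => ?_
    have := congrArg (fun σ : Perm (Fin (ℓ+m+n)) => σ (e0 ℓ m n v)) hPhi
    simp only [Phi_e0] at this
    exact e0_strictMono.injective this
  have h1 : t.2.1 = t'.2.1 := by
    refine Equiv.ext fun v => ?_
    have := congrArg (fun σ : Perm (Fin (ℓ+m+n)) => σ (e1 ℓ m n v)) hPhi
    simp only [Phi_e1] at this
    exact e1_strictMono.injective this
  have h2 : t.2.2 = t'.2.2 := by
    refine Equiv.ext fun v => ?_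
    have := congrArg (fun σ : Perm (Fin (ℓ+m+n)) => σ (e2 ℓ m n v)) hPhi
    simp only [Phi_e2] at this
    exact e2_strictMono.injective this
  exact Prod.ext h0 (Prod.ext h1 h2)

lemma box_subset_union :
    boxLMN ℓ m n ⊆ (⋃ t, chamber ℓ m n t) ∪ {x | ¬ Function.Injective x} := by
  intro x hx
  by_cases hinj : Function.Injective x
  · left
    set t : Perm (Fin ℓ) × Perm (Fin m) × Perm (Fin n) :=
      (Tuple.sort (x ∘ e0 ℓ m n), Tuple.sort (x ∘ e1 ℓ m n), Tuple.sort (x ∘ e2 ℓ m n)) with ht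
    have hu0 : StrictMono ((x ∘ e0 ℓ m n) ∘ (Tuple.sort (x ∘ e0 ℓ m n))) :=
      (Tuple.monotone_sort _).strictMono_of_injective
        ((hinj.comp e0_strictMono.injective).comp (Equiv.injective _))
    have hu1 : StrictMono ((x ∘ e1 ℓ m n) ∘ (Tuple.sort (x ∘ e1 ℓ m n))) :=
      (Tuple.monotone_sort _).strictMono_of_injective
        ((hinj.comp e1_strictMono.injective).comp (Equiv.injective _))
    have hu2 : StrictMono ((x ∘ e2 ℓ m n) ∘ (Tuple.sort (x ∘ e2 ℓ m n))) :=
      (Tuple.monotone_sort _).strictMono_of_injective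
        ((hinj.comp e2_strictMono.injective).comp (Equiv.injective _))
    refine Set.mem_iUnion.2 ⟨t, hx, ?_⟩
    intro i j hij
    simp only [Function.comp_apply]
    rcases idx_cases i with ⟨v, rfl⟩ | ⟨v, rfl⟩ | ⟨v, rfl⟩ <;>
      rcases idx_cases j with ⟨w, rfl⟩ | ⟨w, rfl⟩ | ⟨w, rfl⟩
    · rw [Phi_e0, Phi_e0]
      exact hu0 (e0_strictMono.lt_iff_lt.mp hij)
    · rw [Phi_e0, Phi_e1]
      refine lt_of_le_of_ne (le_trans (box_e0 hx _) (box_e1 hx _).1) (hinj.ne ?_)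
      have h1 := e0_val (m := m) (n := n) (t.1 v)
      have h2 := e1_val (ℓ := ℓ) (n := n) (t.2.1 w)
      have := (t.1 v).isLt
      intro hc
      rw [hc] at h1
      omega
    · rw [Phi_e0, Phi_e2]
      exact lt_of_le_of_lt (box_e0 hx _) (lt_of_lt_of_le one_pos (box_e2 hx _))
    · exfalso
      rw [Fin.lt_def] at hij
      rw [e1_val, e0_val] at hij
      have := w.isLt
      omega
    · rw [Phi_e1, Phi_e1]
      exact hu1 (e1_strictMono.lt_iff_lt.mp hij)
    · rw [Phi_e1, Phi_e2]
      refine lt_of_le_of_ne (le_trans (box_e1 hx _).2 (box_e2 hx _)) (hinj.ne ?_)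
      have h1 := e1_val (ℓ := ℓ) (n := n) (t.2.1 v)
      have h2 := e2_val (ℓ := ℓ) (m := m) (t.2.2 w)
      have := (t.2.1 v).isLt
      intro hc
      rw [hc] at h1
      omega
    · exfalso
      rw [Fin.lt_def] at hij
      rw [e2_val, e0_val] at hij
      have := w.isLt
      omega
    · exfalso
      rw [Fin.lt_def] at hij
      rw [e2_val, e1_val] at hij
      have := w.isLt
      omega
    · rw [Phi_e2, Phi_e2]
      exact hu2 (e2_strictMono.lt_iff_lt.mp hij)
  · right
    exact hinj

lemma absPowR_nonneg (t : ℝ) (c : ℝ) : 0 ≤ absPowR t c := by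
  unfold absPowR
  split_ifs
  · exact le_refl 0
  · exact (Real.exp_pos _).le

lemma norm_absPow (t : ℝ) (c : ℂ) : ‖absPow t c‖ = absPowR t c.re := by
  unfold absPow absPowR
  split_ifs with h
  · simp
  · rw [Complex.norm_exp]
    congr 1
    simp [Complex.mul_re]

lemma norm_iPow_le (w : ℝ) (c : ℂ) :
    ‖iPow w c‖ ≤ max 1 (Real.exp (-(Real.pi * c.im))) * absPowR w c.re := by
  unfold iPow
  split_ifs with h1 h2
  · rw [norm_absPow]
    exact le_mul_of_one_le_left (absPowR_nonneg _ _) (le_max_left _ _)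
  · rw [norm_mul, norm_absPow, Complex.norm_exp]
    have hre : ((Real.pi : ℂ) * Complex.I * c).re = -(Real.pi * c.im) := by
      simp [Complex.mul_re, Complex.mul_im]
    rw [hre]
    exact mul_le_mul_of_nonneg_right (le_max_right _ _) (absPowR_nonneg _ _)
  · have hw : w = 0 := le_antisymm (not_lt.mp h1) (not_lt.mp h2)
    subst hw
    simp only [norm_zero]
    exact mul_nonneg (le_trans zero_le_one (le_max_left _ _)) (absPowR_nonneg _ _)

lemma measurable_absPow (c : ℂ) : Measurable (fun t : ℝ => absPow t c) := by
  unfold absPow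
  refine Measurable.ite (measurableSet_eq_fun measurable_id measurable_const) measurable_const ?_
  exact Complex.measurable_exp.comp
    (measurable_const.mul (Complex.measurable_ofReal.comp Real.measurable_log))

lemma measurable_iPow (c : ℂ) : Measurable (fun w : ℝ => iPow w c) := by
  unfold iPow
  refine Measurable.ite (measurableSet_lt measurable_const measurable_id)
    (measurable_absPow c) ?_
  refine Measurable.ite (measurableSet_lt measurable_id measurable_const) ?_ measurable_const
  exact (measurable_absPow c).const_mul _

lemma measurable_dfIntG (N : ℕ) (α β : Fin N → ℂ) (γ : Fin N → Fin N → ℂ) :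
    Measurable (dfIntG N α β γ) := by
  unfold dfIntG
  refine Measurable.mul ?_ ?_
  · refine Finset.measurable_prod _ fun j _ => Measurable.mul ?_ ?_
    · exact (measurable_absPow (α j)).comp (measurable_pi_apply j)
    · exact (measurable_absPow (β j)).comp (measurable_const.sub (measurable_pi_apply j))
  · refine Finset.measurable_prod _ fun j _ => Finset.measurable_prod _ fun k _ => ?_
    by_cases h : j < k
    · simp only [if_pos h]
      exact (measurable_iPow _).comp ((measurable_pi_apply k).sub (measurable_pi_apply j))
    · simp only [if_neg h]
      exact measurable_const

lemma measurable_evalF (N : ℕ) (F : MvPolynomial (Fin N) ℂ) :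
    Measurable (fun x : Fin N → ℝ => MvPolynomial.eval (fun i => (x i : ℂ)) F) := by
  have hrw : (fun x : Fin N → ℝ => MvPolynomial.eval (fun i => (x i : ℂ)) F)
      = fun x => ∑ d ∈ F.support, F.coeff d * ∏ i ∈ d.support, (x i : ℂ) ^ d i :=
    funext fun x => MvPolynomial.eval_eq _ _
  rw [hrw]
  refine Finset.measurable_sum _ fun d _ => Measurable.const_mul ?_ _
  refine Finset.measurable_prod _ fun i _ => ?_
  exact (Complex.measurable_ofReal.comp (measurable_pi_apply i)).pow_const _

lemma norm_dfIntG_le (N : ℕ) (α β : Fin N → ℂ) (γ : Fin N → Fin N → ℂ) (x : Fin N → ℝ) :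
    ‖dfIntG N α β γ x‖ ≤
      (∏ j, ∏ k, if j < k then max 1 (Real.exp (-(Real.pi * (2 * γ j k).im))) else 1)
        * dfMajG N α β γ x := by
  unfold dfIntG dfMajG
  rw [norm_mul]
  have hS : ‖∏ j, absPow (x j) (α j) * absPow (1 - x j) (β j)‖
      = ∏ j, absPowR (x j) (α j).re * absPowR (1 - x j) (β j).re := by
    rw [norm_prod]
    exact Finset.prod_congr rfl fun j _ => by rw [norm_mul, norm_absPow, norm_absPow]
  rw [hS]
  have hSnn : 0 ≤ ∏ j, absPowR (x j) (α j).re * absPowR (1 - x j) (β j).re :=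
    Finset.prod_nonneg fun j _ => mul_nonneg (absPowR_nonneg _ _) (absPowR_nonneg _ _)
  have hP : ‖∏ j, ∏ k, if j < k then iPow (x k - x j) (2 * γ j k) else 1‖ ≤
      (∏ j, ∏ k, if j < k then max 1 (Real.exp (-(Real.pi * (2 * γ j k).im))) else 1) *
      ∏ j, ∏ k, if j < k then absPowR (x k - x j) (2 * (γ j k).re) else 1 := by
    rw [norm_prod]
    calc ∏ j, ‖∏ k, if j < k then iPow (x k - x j) (2 * γ j k) else 1‖
        = ∏ j, ∏ k, ‖if j < k then iPow (x k - x j) (2 * γ j k) else 1‖ :=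
          Finset.prod_congr rfl fun j _ => norm_prod _ _
      _ ≤ ∏ j, ∏ k, (if j < k then
            max 1 (Real.exp (-(Real.pi * (2 * γ j k).im)))
              * absPowR (x k - x j) (2 * γ j k).re else 1) := by
          refine Finset.prod_le_prod
            (fun j _ => Finset.prod_nonneg fun k _ => norm_nonneg _)
            (fun j _ => Finset.prod_le_prod (fun k _ => norm_nonneg _) (fun k _ => ?_))
          by_cases h : j < k
          · simp only [if_pos h]
            exact norm_iPow_le _ _
          · simp only [if_neg h, norm_one]
            exact le_refl 1
      _ = (∏ j, ∏ k, if j < k then max 1 (Real.exp (-(Real.pi * (2 * γ j k).im))) else 1) *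
          ∏ j, ∏ k, if j < k then absPowR (x k - x j) (2 * (γ j k).re) else 1 := by
          rw [← Finset.prod_mul_distrib]
          refine Finset.prod_congr rfl fun j _ => ?_
          rw [← Finset.prod_mul_distrib]
          refine Finset.prod_congr rfl fun k _ => ?_
          have h2re : (2 * γ j k).re = 2 * (γ j k).re := by
            simp [Complex.mul_re]
          split_ifs with h
          · rw [h2re]
          · rw [mul_one]
  calc (∏ j, absPowR (x j) (α j).re * absPowR (1 - x j) (β j).re) *
        ‖∏ j, ∏ k, if j < k then iPow (x k - x j) (2 * γ j k) else 1‖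
      ≤ (∏ j, absPowR (x j) (α j).re * absPowR (1 - x j) (β j).re) *
        ((∏ j, ∏ k, if j < k then max 1 (Real.exp (-(Real.pi * (2 * γ j k).im))) else 1) *
         ∏ j, ∏ k, if j < k then absPowR (x k - x j) (2 * (γ j k).re) else 1) :=
        mul_le_mul_of_nonneg_left hP hSnn
    _ = (∏ j, ∏ k, if j < k then max 1 (Real.exp (-(Real.pi * (2 * γ j k).im))) else 1) *
        ((∏ j, absPowR (x j) (α j).re * absPowR (1 - x j) (β j).re) *
         ∏ j, ∏ k, if j < k then absPowR (x k - x j) (2 * (γ j k).re) else 1) := by ring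

lemma measurePreserving_compPerm (σ : Perm (Fin (ℓ+m+n))) :
    MeasurePreserving (fun x : Fin (ℓ+m+n) → ℝ => x ∘ σ) volume volume := by
  have h := MeasureTheory.volume_measurePreserving_piCongrLeft (fun _ : Fin (ℓ+m+n) => ℝ) σ.symm
  have he : ⇑(MeasurableEquiv.piCongrLeft (fun _ : Fin (ℓ+m+n) => ℝ) σ.symm)
      = fun x : Fin (ℓ+m+n) → ℝ => x ∘ σ := by
    ext x i
    simp [MeasurableEquiv.piCongrLeft, Equiv.piCongrLeft]
  rwa [he] at h

lemma measurableEmbedding_compPerm (σ : Perm (Fin (ℓ+m+n))) :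
    MeasurableEmbedding (fun x : Fin (ℓ+m+n) → ℝ => x ∘ σ) := by
  have he : ⇑(MeasurableEquiv.piCongrLeft (fun _ : Fin (ℓ+m+n) => ℝ) σ.symm)
      = fun x : Fin (ℓ+m+n) → ℝ => x ∘ σ := by
    ext x i
    simp [MeasurableEquiv.piCongrLeft, Equiv.piCongrLeft]
  rw [← he]
  exact (MeasurableEquiv.piCongrLeft (fun _ : Fin (ℓ+m+n) => ℝ) σ.symm).measurableEmbedding

lemma Phi_one : Phi ℓ m n 1 = 1 := by
  refine Equiv.ext fun i => ?_
  rcases idx_cases i with ⟨v, rfl⟩ | ⟨v, rfl⟩ | ⟨v, rfl⟩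
  · rw [Phi_e0]; rfl
  · rw [Phi_e1]; rfl
  · rw [Phi_e2]; rfl

lemma chamber_preimage (t) :
    chamber ℓ m n t = (fun x : Fin (ℓ+m+n) → ℝ => x ∘ Phi ℓ m n t) ⁻¹' (chamber ℓ m n 1) := by
  ext x
  simp only [chamber, Set.mem_preimage, Set.mem_inter_iff, Set.mem_setOf_eq, Phi_one]
  constructor
  · rintro ⟨hb, hs⟩
    refine ⟨(box_comp t x).mp hb, ?_⟩
    simpa using hs
  · rintro ⟨hb, hs⟩
    refine ⟨(box_comp t x).mpr hb, ?_⟩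
    simpa using hs

lemma integral_chamber
    (α β : Fin (ℓ+m+n) → ℂ) (γ : Fin (ℓ+m+n) → Fin (ℓ+m+n) → ℂ) (gB : ℕ → ℕ → ℂ)
    (hα : ∀ i j, blockIdx ℓ m i = blockIdx ℓ m j → α i = α j)
    (hβ : ∀ i j, blockIdx ℓ m i = blockIdx ℓ m j → β i = β j)
    (hγ : ∀ j k : Fin (ℓ+m+n), j < k → γ j k = gB (blockIdx ℓ m j) (blockIdx ℓ m k))
    (F : MvPolynomial (Fin (ℓ+m+n)) ℂ)
    (hFsym : ∀ σ : Equiv.Perm (Fin (ℓ+m+n)),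
      (∀ i, blockIdx ℓ m i = blockIdx ℓ m (σ i)) → MvPolynomial.rename σ F = F)
    (t) :
    (∫ x in chamber ℓ m n t,
        dfIntG (ℓ+m+n) α β γ x * MvPolynomial.eval (fun i => (x i : ℂ)) F)
      = phase ℓ m n gB t *
        ∫ x in chamber ℓ m n 1,
          selIntG (ℓ+m+n) α β γ x * MvPolynomial.eval (fun i => (x i : ℂ)) F := by
  classical
  have hblkinv : ∀ i, blockIdx ℓ m i = blockIdx ℓ m ((Phi ℓ m n t)⁻¹ i) := by
    intro i
    conv_lhs => rw [← Equiv.Perm.apply_inv_self (Phi ℓ m n t) i, blk_Phi]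
  have heq : Set.EqOn
      (fun x => dfIntG (ℓ+m+n) α β γ x * MvPolynomial.eval (fun i => (x i : ℂ)) F)
      (fun x => phase ℓ m n gB t *
        (selIntG (ℓ+m+n) α β γ (x ∘ Phi ℓ m n t) *
          MvPolynomial.eval (fun i => ((x ∘ Phi ℓ m n t) i : ℂ)) F))
      (chamber ℓ m n t) := by
    intro x hx
    simp only
    rw [core_eq α β γ gB hα hβ hγ t x hx.2]
    have hF : MvPolynomial.eval (fun i => ((x ∘ Phi ℓ m n t) i : ℂ)) F
        = MvPolynomial.eval (fun i => (x i : ℂ)) F := by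
      conv_lhs => rw [← hFsym (Phi ℓ m n t)⁻¹ hblkinv]
      rw [MvPolynomial.eval_rename]
      have harg : ((fun i => (((x ∘ ⇑(Phi ℓ m n t)) i : ℝ) : ℂ)) ∘ ⇑(Phi ℓ m n t)⁻¹)
          = fun i => ((x i : ℝ) : ℂ) := by
        funext i
        simp
      rw [harg]
    rw [hF]
    ring
  rw [setIntegral_congr_fun (measurableSet_chamber t) heq]
  rw [chamber_preimage t]
  rw [(measurePreserving_compPerm (Phi ℓ m n t)).setIntegral_preimage_emb
    (measurableEmbedding_compPerm _)
    (fun y => phase ℓ m n gB t *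
      (selIntG (ℓ+m+n) α β γ y * MvPolynomial.eval (fun i => (y i : ℂ)) F))
    (chamber ℓ m n 1)]
  rw [MeasureTheory.integral_const_mul]

lemma box_ae_union :
    boxLMN ℓ m n =ᵐ[volume] ⋃ t, chamber ℓ m n t := by
  rw [MeasureTheory.ae_eq_set]
  constructor
  · refine measure_mono_null ?_ null_noninj
    intro x hx
    rcases box_subset_union hx.1 with h | h
    · exact absurd h hx.2
    · exact h
  · have : (⋃ t, chamber ℓ m n t) \ boxLMN ℓ m n = ∅ := by
      rw [Set.diff_eq_empty]
      exact Set.iUnion_subset fun t => Set.inter_subset_left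
    rw [this]
    exact measure_empty

lemma chamber_one_ae_simplex :
    chamber ℓ m n 1 =ᵐ[volume] simplexLMN ℓ m n := by
  rw [MeasureTheory.ae_eq_set]
  constructor
  · have : chamber ℓ m n 1 \ simplexLMN ℓ m n = ∅ := by
      rw [Set.diff_eq_empty]
      rintro x ⟨hb, hs⟩
      simp only [Set.mem_setOf_eq, Phi_one] at hs
      have hsm : StrictMono x := by simpa using hs
      exact ⟨hb, fun i j hij => hsm.monotone hij⟩
    rw [this]
    exact measure_empty
  · refine measure_mono_null ?_ null_noninj
    rintro x ⟨⟨hb, hmono⟩, hnc⟩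
    intro hinj
    apply hnc
    refine ⟨hb, ?_⟩
    simp only [Set.mem_setOf_eq, Phi_one]
    have : StrictMono x :=
      (Monotone.strictMono_of_injective (fun i j hij => hmono i j hij) hinj)
    simpa using this

lemma sum_phase (gB : ℕ → ℕ → ℂ) :
    ∑ t : Perm (Fin ℓ) × Perm (Fin m) × Perm (Fin n), phase ℓ m n gB t =
      (∏ k ∈ Finset.range ℓ, ∑ i ∈ Finset.range (k + 1),
          Complex.exp (2 * (Real.pi : ℂ) * Complex.I * (i : ℂ) * gB 0 0)) *
      (∏ k ∈ Finset.range m, ∑ i ∈ Finset.range (k + 1),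
          Complex.exp (2 * (Real.pi : ℂ) * Complex.I * (i : ℂ) * gB 1 1)) *
      (∏ k ∈ Finset.range n, ∑ i ∈ Finset.range (k + 1),
          Complex.exp (2 * (Real.pi : ℂ) * Complex.I * (i : ℂ) * gB 2 2)) := by
  classical
  have hq : ∀ (g : ℂ) (k : ℕ), (∑ i ∈ Finset.range (k + 1),
        Complex.exp (2 * (Real.pi : ℂ) * Complex.I * (i : ℂ) * g))
      = ∑ i ∈ Finset.range (k + 1), (Complex.exp (2 * (Real.pi : ℂ) * Complex.I * g)) ^ i := by
    intro g k
    refine Finset.sum_congr rfl fun i _ => ?_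
    rw [← Complex.exp_nat_mul]
    congr 1
    push_cast
    ring
  have h0 : (∏ k ∈ Finset.range ℓ, ∑ i ∈ Finset.range (k + 1),
        Complex.exp (2 * (Real.pi : ℂ) * Complex.I * (i : ℂ) * gB 0 0))
      = ∑ σ : Perm (Fin ℓ), Wq (Complex.exp (2 * (Real.pi : ℂ) * Complex.I * gB 0 0)) σ := by
    rw [sum_Wq]
    exact Finset.prod_congr rfl fun k _ => (hq _ k)
  have h1 : (∏ k ∈ Finset.range m, ∑ i ∈ Finset.range (k + 1),
        Complex.exp (2 * (Real.pi : ℂ) * Complex.I * (i : ℂ) * gB 1 1))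
      = ∑ σ : Perm (Fin m), Wq (Complex.exp (2 * (Real.pi : ℂ) * Complex.I * gB 1 1)) σ := by
    rw [sum_Wq]
    exact Finset.prod_congr rfl fun k _ => (hq _ k)
  have h2 : (∏ k ∈ Finset.range n, ∑ i ∈ Finset.range (k + 1),
        Complex.exp (2 * (Real.pi : ℂ) * Complex.I * (i : ℂ) * gB 2 2))
      = ∑ σ : Perm (Fin n), Wq (Complex.exp (2 * (Real.pi : ℂ) * Complex.I * gB 2 2)) σ := by
    rw [sum_Wq]
    exact Finset.prod_congr rfl fun k _ => (hq _ k)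
  rw [h0, h1, h2]
  rw [Finset.sum_congr rfl (fun t _ => phase_eq gB t)]
  rw [Fintype.sum_prod_type]
  simp_rw [mul_assoc, ← Finset.mul_sum]
  rw [← Finset.sum_mul]
  congr 1
  rw [Fintype.sum_prod_type]
  simp_rw [← Finset.mul_sum]
  rw [← Finset.sum_mul]

theorem stmt11 (ℓ m n : ℕ) (hN : 1 ≤ ℓ + m + n)
    (α β : Fin (ℓ + m + n) → ℂ) (γ : Fin (ℓ + m + n) → Fin (ℓ + m + n) → ℂ)
    (gB : ℕ → ℕ → ℂ)
    (hα : ∀ i j, blockIdx ℓ m i = blockIdx ℓ m j → α i = α j)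
    (hβ : ∀ i j, blockIdx ℓ m i = blockIdx ℓ m j → β i = β j)
    (hγ : ∀ j k : Fin (ℓ + m + n), j < k → γ j k = gB (blockIdx ℓ m j) (blockIdx ℓ m k))
    (F : MvPolynomial (Fin (ℓ + m + n)) ℂ)
    (hFsym : ∀ σ : Equiv.Perm (Fin (ℓ + m + n)),
      (∀ i, blockIdx ℓ m i = blockIdx ℓ m (σ i)) → MvPolynomial.rename σ F = F)
    (hint : IntegrableOn
      (fun x => dfMajG (ℓ + m + n) α β γ x *
        ‖MvPolynomial.eval (fun i => (x i : ℂ)) F‖)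
      (boxLMN ℓ m n) volume) :
    (∫ x in boxLMN ℓ m n,
        dfIntG (ℓ + m + n) α β γ x * MvPolynomial.eval (fun i => (x i : ℂ)) F)
      = (∏ k ∈ Finset.range ℓ, ∑ i ∈ Finset.range (k + 1),
          Complex.exp (2 * (Real.pi : ℂ) * Complex.I * (i : ℂ) * gB 0 0)) *
        (∏ k ∈ Finset.range m, ∑ i ∈ Finset.range (k + 1),
          Complex.exp (2 * (Real.pi : ℂ) * Complex.I * (i : ℂ) * gB 1 1)) *
        (∏ k ∈ Finset.range n, ∑ i ∈ Finset.range (k + 1),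
          Complex.exp (2 * (Real.pi : ℂ) * Complex.I * (i : ℂ) * gB 2 2)) *
        ∫ x in simplexLMN ℓ m n,
          selIntG (ℓ + m + n) α β γ x * MvPolynomial.eval (fun i => (x i : ℂ)) F := by
  classical
  set Cc : ℝ :=
    ∏ j, ∏ k, if j < k then max 1 (Real.exp (-(Real.pi * (2 * γ j k).im))) else 1 with hCc
  have hmeas : Measurable fun x : Fin (ℓ+m+n) → ℝ =>
      dfIntG (ℓ+m+n) α β γ x * MvPolynomial.eval (fun i => (x i : ℂ)) F :=
    (measurable_dfIntG _ _ _ _).mul (measurable_evalF _ F)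
  have hInt : IntegrableOn
      (fun x => dfIntG (ℓ+m+n) α β γ x * MvPolynomial.eval (fun i => (x i : ℂ)) F)
      (boxLMN ℓ m n) volume := by
    refine Integrable.mono' (hint.const_mul Cc) hmeas.aestronglyMeasurable ?_
    filter_upwards with x
    rw [norm_mul]
    calc ‖dfIntG (ℓ+m+n) α β γ x‖ * ‖MvPolynomial.eval (fun i => (x i : ℂ)) F‖
        ≤ (Cc * dfMajG (ℓ+m+n) α β γ x) * ‖MvPolynomial.eval (fun i => (x i : ℂ)) F‖ :=
          mul_le_mul_of_nonneg_right (norm_dfIntG_le _ _ _ _ _) (norm_nonneg _)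
      _ = Cc * (dfMajG (ℓ+m+n) α β γ x *
            ‖MvPolynomial.eval (fun i => (x i : ℂ)) F‖) := by
          ring
  rw [setIntegral_congr_set box_ae_union]
  rw [integral_iUnion_fintype measurableSet_chamber chamber_pairwise_disjoint
    (fun t => hInt.mono_set Set.inter_subset_left)]
  rw [Finset.sum_congr rfl (fun t _ => integral_chamber α β γ gB hα hβ hγ F hFsym t)]
  rw [← Finset.sum_mul, sum_phase gB]
  rw [setIntegral_congr_set chamber_one_ae_simplex]
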